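/- arXiv:1902.05339 — 2 statements merged into one kernel-verified Lean document; each statement's English description precedes it below -/
import Mathlib

section
/- Let ξ : [0,T] × ℝ^d → ℝ^d be a C¹ solution of ∂_t ξ_t + Dξ_t v_t = Ψ_t along a C¹ velocity field v, and let μ_t = (Q_t)_# μ₀ solve the continuity equation ∂_t μ_t + ∇·(v_t μ_t) = 0. Then the vector-valued measure m_t := ξ_t μ_t (i.e., dm_t = ξ_t dμ_t) is a distributional solution of the momentum equation ∂_t m_t + ∇·(v_t ⊗ m_t) = Ψ_t μ_t, in the sense that d/dt ∫ φ · dm_t = ∫ (Dφ v_t) · ξ_t dμ_t + ∫ φ · Ψ_t dμ_t for all φ ∈ C_c^∞(ℝ^d, ℝ^d). -/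
open MeasureTheory Metric

/-- if `ξ` is a `C¹` solution of the transport equation
`∂_t ξ + Dξ v = Ψ` and `μ_t = (Q_t)_#μ₀` solves the continuity equation, then
`m_t = ξ_t μ_t` solves the momentum equation in the distributional sense:
`d/dt ∫ φ·dm_t = ∫ (Dφ v_t)·ξ_t dμ_t + ∫ φ·Ψ_t dμ_t` for all
`φ ∈ C_c^∞(ℝ^d, ℝ^d)`. -/
theorem stmt_12 {d : ℕ}
    (v : ℝ → EuclideanSpace ℝ (Fin d) → EuclideanSpace ℝ (Fin d))
    (hv : ContDiff ℝ 1 (fun p : ℝ × EuclideanSpace ℝ (Fin d) => v p.1 p.2))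
    (Ψ : ℝ → EuclideanSpace ℝ (Fin d) → EuclideanSpace ℝ (Fin d))
    (hΨ : Continuous (fun p : ℝ × EuclideanSpace ℝ (Fin d) => Ψ p.1 p.2))
    (ξ : ℝ → EuclideanSpace ℝ (Fin d) → EuclideanSpace ℝ (Fin d))
    (hξ : ContDiff ℝ 1 (fun p : ℝ × EuclideanSpace ℝ (Fin d) => ξ p.1 p.2))
    -- ξ solves ∂_t ξ + Dξ v = Ψ
    (hξeq : ∀ t x, HasDerivAt (fun s => ξ s x)
      (Ψ t x - (fderiv ℝ (ξ t) x) (v t x)) t)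
    -- Lagrangian flow and push-forward measures
    (Q : ℝ → EuclideanSpace ℝ (Fin d) → EuclideanSpace ℝ (Fin d))
    (hQcont : Continuous (fun p : ℝ × EuclideanSpace ℝ (Fin d) => Q p.1 p.2))
    (hQ0 : ∀ x, Q 0 x = x)
    (hQode : ∀ t x, HasDerivAt (fun τ => Q τ x) (v t (Q t x)) t)
    (μ0 : Measure (EuclideanSpace ℝ (Fin d))) [IsProbabilityMeasure μ0]
    (hsupp : ∃ R : ℝ, μ0 (Metric.closedBall 0 R)ᶜ = 0) :
    ∀ φ : EuclideanSpace ℝ (Fin d) → EuclideanSpace ℝ (Fin d),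
      ContDiff ℝ (⊤ : ℕ∞) φ → HasCompactSupport φ →
      ∀ t : ℝ, HasDerivAt
        (fun s => ∫ x, (inner ℝ (φ x) (ξ s x) : ℝ) ∂(μ0.map (Q s)))
        ((∫ x, (inner ℝ ((fderiv ℝ φ x) (v t x)) (ξ t x) : ℝ) ∂(μ0.map (Q t)))
          + ∫ x, (inner ℝ (φ x) (Ψ t x) : ℝ) ∂(μ0.map (Q t))) t := by
  intro φ hφ hφc t
  obtain ⟨R, hR⟩ := hsupp
  have hball : ∀ᵐ x ∂μ0, x ∈ Metric.closedBall (0 : EuclideanSpace ℝ (Fin d)) R :=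
    mem_ae_iff.mpr hR
  have hξc : Continuous (fun p : ℝ × EuclideanSpace ℝ (Fin d) => ξ p.1 p.2) := hξ.continuous
  have hvc : Continuous (fun p : ℝ × EuclideanSpace ℝ (Fin d) => v p.1 p.2) := hv.continuous
  have hφd : Differentiable ℝ φ := hφ.differentiable (by simp)
  have hφ' : Continuous (fderiv ℝ φ) := hφ.continuous_fderiv (by simp)
  have hQm : ∀ s : ℝ, Continuous (Q s) := fun s =>
    hQcont.comp (continuous_const.prodMk continuous_id)
  -- integrability of continuous functions w.r.t. μ0
  have key : ∀ f : EuclideanSpace ℝ (Fin d) → ℝ, Continuous f → Integrable f μ0 := by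
    intro f hf
    obtain ⟨C, hC⟩ :=
      (isCompact_closedBall (0 : EuclideanSpace ℝ (Fin d)) R).exists_bound_of_continuousOn
        hf.continuousOn
    refine Integrable.mono' (integrable_const C) hf.aestronglyMeasurable ?_
    filter_upwards [hball] with x hx using hC x hx
  -- functions under the integral sign
  set F : ℝ → EuclideanSpace ℝ (Fin d) → ℝ :=
    fun s x => (inner ℝ (φ (Q s x)) (ξ s (Q s x)) : ℝ) with hFdef
  set A : EuclideanSpace ℝ (Fin d) → ℝ :=
    fun x => (inner ℝ ((fderiv ℝ φ (Q t x)) (v t (Q t x))) (ξ t (Q t x)) : ℝ) with hAdef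
  set B : EuclideanSpace ℝ (Fin d) → ℝ :=
    fun x => (inner ℝ (φ (Q t x)) (Ψ t (Q t x)) : ℝ) with hBdef
  set F' : ℝ → EuclideanSpace ℝ (Fin d) → ℝ :=
    fun s x => (inner ℝ (φ (Q s x)) (Ψ s (Q s x)) : ℝ)
      + (inner ℝ ((fderiv ℝ φ (Q s x)) (v s (Q s x))) (ξ s (Q s x)) : ℝ) with hF'def
  -- joint continuity
  have hQξ : Continuous (fun p : ℝ × EuclideanSpace ℝ (Fin d) => ξ p.1 (Q p.1 p.2)) :=
    hξc.comp (continuous_fst.prodMk hQcont)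
  have hQv : Continuous (fun p : ℝ × EuclideanSpace ℝ (Fin d) => v p.1 (Q p.1 p.2)) :=
    hvc.comp (continuous_fst.prodMk hQcont)
  have hQΨ : Continuous (fun p : ℝ × EuclideanSpace ℝ (Fin d) => Ψ p.1 (Q p.1 p.2)) :=
    hΨ.comp (continuous_fst.prodMk hQcont)
  have hQφ : Continuous (fun p : ℝ × EuclideanSpace ℝ (Fin d) => φ (Q p.1 p.2)) :=
    hφ.continuous.comp hQcont
  have hFc : Continuous (fun p : ℝ × EuclideanSpace ℝ (Fin d) => F p.1 p.2) :=
    hQφ.inner hQξ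
  have hF'c : Continuous (fun p : ℝ × EuclideanSpace ℝ (Fin d) => F' p.1 p.2) :=
    (hQφ.inner hQΨ).add (((hφ'.comp hQcont).clm_apply hQv).inner hQξ)
  -- pointwise derivative
  have hderiv : ∀ s x, HasDerivAt (fun τ => F τ x) (F' s x) s := by
    intro s x
    have hγ : HasDerivAt (fun τ => ((τ, Q τ x) : ℝ × EuclideanSpace ℝ (Fin d)))
        (1, v s (Q s x)) s := (hasDerivAt_id s).prodMk (hQode s x)
    have hL := (hξ.differentiable one_ne_zero (s, Q s x)).hasFDerivAt
    set L := fderiv ℝ (fun p : ℝ × EuclideanSpace ℝ (Fin d) => ξ p.1 p.2) (s, Q s x) with hLdef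
    have h1 : HasDerivAt (fun τ => ξ τ (Q τ x)) (L (1, v s (Q s x))) s :=
      by have := hL.comp_hasDerivAt s hγ; exact this
    have htime : HasDerivAt (fun τ => ξ τ (Q s x))
        (L (1, (0 : EuclideanSpace ℝ (Fin d)))) s := by
      have hpm : HasDerivAt (fun τ => ((τ, Q s x) : ℝ × EuclideanSpace ℝ (Fin d))) (1, 0) s :=
        (hasDerivAt_id s).prodMk (hasDerivAt_const s (Q s x))
      exact hL.comp_hasDerivAt s hpm
    have ht : L (1, (0 : EuclideanSpace ℝ (Fin d)))
        = Ψ s (Q s x) - (fderiv ℝ (ξ s) (Q s x)) (v s (Q s x)) :=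
      htime.unique (hξeq s (Q s x))
    have hspace : HasFDerivAt (ξ s)
        (L.comp (ContinuousLinearMap.inr ℝ ℝ (EuclideanSpace ℝ (Fin d)))) (Q s x) :=
      hL.comp (Q s x) (hasFDerivAt_prodMk_right s (Q s x))
    have hs : fderiv ℝ (ξ s) (Q s x)
        = L.comp (ContinuousLinearMap.inr ℝ ℝ (EuclideanSpace ℝ (Fin d))) := hspace.fderiv
    have hLw : L (1, v s (Q s x)) = Ψ s (Q s x) := by
      have h12 : ((1 : ℝ), v s (Q s x))
          = ((1 : ℝ), (0 : EuclideanSpace ℝ (Fin d))) + (0, v s (Q s x)) := by simp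
      rw [h12, map_add, ht, hs]
      simp [ContinuousLinearMap.comp_apply]
    have hξQ : HasDerivAt (fun τ => ξ τ (Q τ x)) (Ψ s (Q s x)) s := hLw ▸ h1
    have hφQ : HasDerivAt (fun τ => φ (Q τ x)) ((fderiv ℝ φ (Q s x)) (v s (Q s x))) s :=
      (hφd (Q s x)).hasFDerivAt.comp_hasDerivAt s (hQode s x)
    exact hφQ.inner ℝ hξQ
  -- rewrite the pushforward integrals
  have hmap : ∀ (s : ℝ) (g : EuclideanSpace ℝ (Fin d) → ℝ), Continuous g →
      ∫ y, g y ∂(μ0.map (Q s)) = ∫ x, g (Q s x) ∂μ0 := fun s g hg =>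
    integral_map (hQm s).aemeasurable hg.aestronglyMeasurable
  have hFun : (fun s => ∫ x, (inner ℝ (φ x) (ξ s x) : ℝ) ∂(μ0.map (Q s)))
      = fun s => ∫ x, F s x ∂μ0 := by
    funext s
    exact hmap s (fun y => (inner ℝ (φ y) (ξ s y) : ℝ))
      (hφ.continuous.inner (hξc.comp (continuous_const.prodMk continuous_id)))
  have hAcont : Continuous A :=
    ((hφ'.comp hQcont).clm_apply hQv).inner hQξ |>.comp
      (continuous_const.prodMk continuous_id)
  have hBcont : Continuous B :=
    (hQφ.inner hQΨ).comp (continuous_const.prodMk continuous_id)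
  have hRHS1 : (∫ x, (inner ℝ ((fderiv ℝ φ x) (v t x)) (ξ t x) : ℝ) ∂(μ0.map (Q t)))
      = ∫ x, A x ∂μ0 :=
    hmap t _ ((hφ'.clm_apply (hvc.comp (continuous_const.prodMk continuous_id))).inner
      (hξc.comp (continuous_const.prodMk continuous_id)))
  have hRHS2 : (∫ x, (inner ℝ (φ x) (Ψ t x) : ℝ) ∂(μ0.map (Q t))) = ∫ x, B x ∂μ0 :=
    hmap t _ (hφ.continuous.inner (hΨ.comp (continuous_const.prodMk continuous_id)))
  rw [hFun, hRHS1, hRHS2]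
  -- dominated differentiation
  have hK : IsCompact ((Set.Icc (t - 1) (t + 1)) ×ˢ
      Metric.closedBall (0 : EuclideanSpace ℝ (Fin d)) R) :=
    isCompact_Icc.prod (isCompact_closedBall _ _)
  obtain ⟨C, hC⟩ := hK.exists_bound_of_continuousOn hF'c.continuousOn
  have main := hasDerivAt_integral_of_dominated_loc_of_deriv_le (μ := μ0)
    (F := F) (F' := F') (x₀ := t) (bound := fun _ => C) (Metric.ball_mem_nhds t one_pos)
    (Filter.Eventually.of_forall fun s =>
      (hFc.comp (continuous_const.prodMk continuous_id)).aestronglyMeasurable)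
    (key (F t) (hFc.comp (continuous_const.prodMk continuous_id)))
    ((hF'c.comp (continuous_const.prodMk continuous_id)).aestronglyMeasurable)
    ?_ (integrable_const C)
    (Filter.Eventually.of_forall fun x => fun s _ => hderiv s x)
  · have hsplit : ∫ x, F' t x ∂μ0 = (∫ x, A x ∂μ0) + ∫ x, B x ∂μ0 := by
      rw [← integral_add (key A hAcont) (key B hBcont)]
      refine integral_congr_ae (Filter.Eventually.of_forall fun x => ?_)
      simp only [hF'def, hAdef, hBdef]
      ring
    rw [← hsplit]
    exact main.2
  · filter_upwards [hball] with x hx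
    intro s hsmem
    have hsI : s ∈ Set.Icc (t - 1) (t + 1) := by
      rw [Real.ball_eq_Ioo] at hsmem
      exact Set.Ioo_subset_Icc_self hsmem
    exact hC (s, x) (Set.mk_mem_prod hsI hx)
end

section
/- Let x^N = (x^{N,1},…,x^{N,N}) and ξ^N = (ξ^{N,1},…,ξ^{N,N}) be trajectories in ℝ^d, with empirical measure μ_t^N = (1/N)Σ_i δ_{x_t^{N,i}}, and suppose ξ^N solves the particle adjoint system dξ_t^i/dt = (1/N)Σ_j ∇K₁(x_t^i − x_t^j) ξ_t^i − (1/N)Σ_j ∇K₁(x_t^j − x_t^i) ξ_t^j + Σ_ℓ ∇K₂(x_t^i − u_t^ℓ) ξ_t^i + Σ_l ∂_l j(⟨g₁,μ_t^N⟩,…,⟨g_L,μ_t^N⟩) ∇g_l(x_t^i), with ξ_T^i = 0, where K₁, K₂ ∈ C_b²(ℝ^d), j ∈ C¹(ℝ^L), g_l ∈ C¹(ℝ^d) with linearly growing gradients. Then there is a constant C_ξ, independent of N, depending only on bounds on DK₁, DK₂, Dj and Dg_l and T, such that sup_{t∈[0,T]} (1/N) Σ_{i=1}^N |ξ_t^{N,i}|²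 ≤ C_ξ. -/
/-!
The particles have velocities bounded by `CK (1 + M)`, so they stay in the ball of radius
`R + CK (1 + M) T`; on that ball the forcing term `Σ_l ∂_l j · ∇g_l` is bounded by a constant `ε`
independent of `N`. Regard `ξ_t` as a vector of `(ℝ^d)^N` with the `ℓ²` norm. The diagonal terms of
the adjoint system act with norm at most `CK` and `M CK`, and the transposed mean-field term
`(1/N) Σ_k DK₁(x_k - x_i) ξ_k` also has norm at most `CK` by Cauchy–Schwarz, while the forcing
vector has norm at most `√N ε`. Gronwall's inequality backward from `ξ_T = 0` gives
`‖ξ_t‖ ≤ √N ε T e^{CK (2 + M) T}`, and the factor `1/N` in front of `‖ξ_t‖²` cancels the `N`.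
-/

open Finset Real Set

theorem PiLp.hasDerivAt_toLp {ι : Type*} [Fintype ι] {E : ι → Type*}
    [∀ i, NormedAddCommGroup (E i)] [∀ i, NormedSpace ℝ (E i)] (p : ENNReal) [Fact (1 ≤ p)]
    {f : ℝ → (i : ι) → E i} {f' : (i : ι) → E i} {t : ℝ}
    (hf : ∀ i, HasDerivAt (fun s => f s i) (f' i) t) :
    HasDerivAt (fun s => WithLp.toLp p (f s)) (WithLp.toLp p f') t :=
  (PiLp.hasFDerivAt_toLp p (f t)).comp_hasDerivAt t (hasDerivAt_pi.2 hf)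

theorem gronwallBound_zero_le {K ε x : ℝ} (hK : 0 ≤ K) (hε : 0 ≤ ε) :
    gronwallBound 0 K ε x ≤ ε * x * exp (K * x) := by
  rcases hK.eq_or_lt with rfl | hK
  · simp [gronwallBound_K0]
  have hexp : exp (K * x) - 1 ≤ K * x * exp (K * x) := by
    have h := add_one_le_exp (-(K * x))
    have h1 : exp (-(K * x)) * exp (K * x) = 1 := by rw [← exp_add]; simp
    nlinarith [exp_pos (K * x)]
  calc gronwallBound 0 K ε x = ε * ((exp (K * x) - 1) / K) := by
        rw [gronwallBound_of_K_ne_0 hK.ne']; ring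
    _ ≤ ε * (x * exp (K * x)) := by
        gcongr
        rw [div_le_iff₀ hK]
        linarith
    _ = ε * x * exp (K * x) := by ring

section Calculus
variable {E : Type*} [NormedAddCommGroup E] [NormedSpace ℝ E]

theorem norm_le_norm_add_of_norm_deriv_le {f f' : ℝ → E} {a b B : ℝ}
    (hf : ∀ t ∈ Icc a b, HasDerivAt f (f' t) t) (hB : ∀ t ∈ Icc a b, ‖f' t‖ ≤ B) :
    ∀ t ∈ Icc a b, ‖f t‖ ≤ ‖f a‖ + B * (b - a) := by
  intro t ht
  have hdiff := norm_image_sub_le_of_norm_deriv_le_segment'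
    (fun s hs => (hf s hs).hasDerivWithinAt) (fun s hs => hB s (Ico_subset_Icc_self hs)) t ht
  have hB0 : 0 ≤ B := (norm_nonneg _).trans (hB t ht)
  calc ‖f t‖ ≤ ‖f a‖ + ‖f t - f a‖ := norm_le_norm_add_norm_sub' _ _
    _ ≤ ‖f a‖ + B * (b - a) := by gcongr; exact hdiff.trans (by gcongr; exact ht.2)

theorem norm_le_gronwallBound_of_norm_deriv_le_backward {f f' : ℝ → E} {δ K ε a b : ℝ}
    (hf : ∀ t ∈ Icc a b, HasDerivAt f (f' t) t) (hb : ‖f b‖ ≤ δ)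
    (bound : ∀ t ∈ Icc a b, ‖f' t‖ ≤ K * ‖f t‖ + ε) :
    ∀ t ∈ Icc a b, ‖f t‖ ≤ gronwallBound δ K ε (b - t) := by
  have mem {s : ℝ} (hs : s ∈ Icc 0 (b - a)) : b - s ∈ Icc a b :=
    ⟨by linarith [hs.2], by linarith [hs.1]⟩
  have hrev : ∀ s ∈ Icc 0 (b - a), HasDerivAt (fun r => f (b - r)) (-f' (b - s)) s := fun s hs => by
    simpa [Function.comp_def] using (hf _ (mem hs)).scomp s ((hasDerivAt_id s).const_sub b)
  have key := norm_le_gronwallBound_of_norm_deriv_right_le (a := 0) (b := b - a)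
    (fun s hs => (hrev s hs).continuousAt.continuousWithinAt)
    (fun s hs => (hrev s (Ico_subset_Icc_self hs)).hasDerivWithinAt) (by simpa using hb)
    (fun s hs => by simpa using bound _ (mem (Ico_subset_Icc_self hs)))
  intro t ht
  simpa using key (b - t) ⟨by linarith [ht.2], by linarith [ht.1]⟩

theorem norm_le_of_norm_deriv_le_of_eq_zero_right {f f' : ℝ → E} {K ε a b : ℝ}
    (hK : 0 ≤ K) (hε : 0 ≤ ε)
    (hf : ∀ t ∈ Icc a b, HasDerivAt f (f' t) t) (hb : f b = 0)
    (bound : ∀ t ∈ Icc a b, ‖f' t‖ ≤ K * ‖f t‖ + ε) :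
    ∀ t ∈ Icc a b, ‖f t‖ ≤ ε * (b - a) * exp (K * (b - a)) := by
  intro t ht
  calc ‖f t‖ ≤ gronwallBound 0 K ε (b - t) :=
        norm_le_gronwallBound_of_norm_deriv_le_backward hf (by simp [hb]) bound t ht
    _ ≤ ε * (b - t) * exp (K * (b - t)) := gronwallBound_zero_le hK hε
    _ ≤ ε * (b - a) * exp (K * (b - a)) := by
        have hab : a ≤ b := ht.1.trans ht.2
        gcongr <;> linarith [ht.1]

end Calculus

section Sums
variable {ι E : Type*} [Fintype ι] [SeminormedAddCommGroup E]

theorem norm_sum_le_card_mul {f : ι → E} {C : ℝ} (hf : ∀ k, ‖f k‖ ≤ C) :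
    ‖∑ k, f k‖ ≤ Fintype.card ι * C := by
  simpa [card_univ] using norm_sum_le_of_le univ fun k _ => hf k

theorem norm_average_le [NormedSpace ℝ E] {f : ι → E} {C : ℝ} (hC : 0 ≤ C)
    (hf : ∀ k, ‖f k‖ ≤ C) : ‖(Fintype.card ι : ℝ)⁻¹ • ∑ k, f k‖ ≤ C := by
  rw [norm_smul, norm_inv, Real.norm_natCast]
  calc (Fintype.card ι : ℝ)⁻¹ * ‖∑ k, f k‖ ≤ (Fintype.card ι : ℝ)⁻¹ * (Fintype.card ι * C) := by
        gcongr; exact norm_sum_le_card_mul hf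
    _ ≤ C := by rw [← mul_assoc]; exact mul_le_of_le_one_left hC inv_mul_le_one

end Sums

namespace PiLp
variable {ι E : Type*} [Fintype ι] [SeminormedAddCommGroup E]

theorem norm_toLp_le_sqrt_card_mul {w : ι → E} {C : ℝ} (hC : 0 ≤ C) (hw : ∀ i, ‖w i‖ ≤ C) :
    ‖WithLp.toLp 2 w‖ ≤ √(Fintype.card ι) * C := by
  rw [norm_eq_of_L2, ← Real.sqrt_sq hC, ← Real.sqrt_mul (Nat.cast_nonneg _)]
  gcongr
  refine (sum_le_sum fun i _ => pow_le_pow_left₀ (norm_nonneg _) (hw i) 2).trans_eq ?_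
  rw [sum_const, card_univ, nsmul_eq_mul]

theorem norm_toLp_le_mul_norm_toLp {v w : ι → E} {C : ℝ} (hC : 0 ≤ C)
    (h : ∀ i, ‖v i‖ ≤ C * ‖w i‖) : ‖WithLp.toLp 2 v‖ ≤ C * ‖WithLp.toLp 2 w‖ := by
  rw [norm_eq_of_L2, norm_eq_of_L2, ← Real.sqrt_sq hC, ← Real.sqrt_mul (sq_nonneg C), mul_sum]
  gcongr with i
  simpa [mul_pow] using pow_le_pow_left₀ (norm_nonneg _) (h i) 2

theorem sum_norm_le_sqrt_card_mul_norm_toLp (w : ι → E) :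
    ∑ i, ‖w i‖ ≤ √(Fintype.card ι) * ‖WithLp.toLp 2 w‖ := by
  rw [norm_eq_of_L2, ← Real.sqrt_mul (Nat.cast_nonneg _)]
  refine Real.le_sqrt_of_sq_le ?_
  simpa [card_univ] using sq_sum_le_card_mul_sum_sq (s := univ) (f := fun i => ‖w i‖)

end PiLp

section MeanField
variable {ι κ E F : Type*} [Fintype ι] [Fintype κ]
  [NormedAddCommGroup E] [NormedSpace ℝ E] [NormedAddCommGroup F] [NormedSpace ℝ F]

theorem PiLp.norm_toLp_average_apply_le (A : ι → ι → E →L[ℝ] F) {C : ℝ} (hC : 0 ≤ C)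
    (hA : ∀ i k, ‖A i k‖ ≤ C) (w : ι → E) :
    ‖WithLp.toLp 2 (fun i => (Fintype.card ι : ℝ)⁻¹ • ∑ k, A i k (w k))‖
      ≤ C * ‖WithLp.toLp 2 w‖ := by
  set n : ℝ := (Fintype.card ι : ℝ)
  have hcoord : ∀ i, ‖n⁻¹ • ∑ k, A i k (w k)‖ ≤ n⁻¹ * (C * (√n * ‖WithLp.toLp 2 w‖)) := by
    intro i
    rw [norm_smul, norm_inv, Real.norm_natCast]
    gcongr
    calc ‖∑ k, A i k (w k)‖ ≤ ∑ k, C * ‖w k‖ :=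
          norm_sum_le_of_le _ fun k _ => (A i k).le_of_opNorm_le (hA i k) _
      _ ≤ C * (√n * ‖WithLp.toLp 2 w‖) := by
          rw [← mul_sum]; gcongr; exact sum_norm_le_sqrt_card_mul_norm_toLp w
  calc _ ≤ √n * (n⁻¹ * (C * (√n * ‖WithLp.toLp 2 w‖))) :=
        norm_toLp_le_sqrt_card_mul (by positivity) hcoord
    _ = (n⁻¹ * n) * (C * ‖WithLp.toLp 2 w‖) := by
        linear_combination
          (n⁻¹ * (C * ‖WithLp.toLp 2 w‖)) * Real.mul_self_sqrt (by positivity : 0 ≤ n)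
    _ ≤ C * ‖WithLp.toLp 2 w‖ := mul_le_of_le_one_left (by positivity) inv_mul_le_one

theorem PiLp.norm_toLp_particleAdjoint_le (A : ι → ι → E →L[ℝ] E) (B : ι → κ → E →L[ℝ] E)
    {C ε : ℝ} (hC : 0 ≤ C) (hε : 0 ≤ ε) (hA : ∀ i k, ‖A i k‖ ≤ C) (hB : ∀ i ℓ, ‖B i ℓ‖ ≤ C)
    (f : ι → E) (hf : ∀ i, ‖f i‖ ≤ ε) (w : ι → E) :
    ‖WithLp.toLp 2 (fun i => (Fintype.card ι : ℝ)⁻¹ • ∑ k, A i k (w i)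
        - (Fintype.card ι : ℝ)⁻¹ • ∑ k, A k i (w k) + ∑ ℓ, B i ℓ (w i) + f i)‖
      ≤ C * (2 + Fintype.card κ) * ‖WithLp.toLp 2 w‖ + √(Fintype.card ι) * ε := by
  set n : ℝ := (Fintype.card ι : ℝ)
  have hself : ‖WithLp.toLp 2 (fun i => n⁻¹ • ∑ k, A i k (w i))‖ ≤ C * ‖WithLp.toLp 2 w‖ :=
    norm_toLp_le_mul_norm_toLp hC fun i =>
      norm_average_le (by positivity) fun k => (A i k).le_of_opNorm_le (hA i k) _
  have hcross : ‖WithLp.toLp 2 (fun i => n⁻¹ • ∑ k, A k i (w k))‖ ≤ C * ‖WithLp.toLp 2 w‖ :=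
    norm_toLp_average_apply_le (fun i k => A k i) hC (fun i k => hA k i) w
  have hext : ‖WithLp.toLp 2 (fun i => ∑ ℓ, B i ℓ (w i))‖
      ≤ Fintype.card κ * C * ‖WithLp.toLp 2 w‖ :=
    norm_toLp_le_mul_norm_toLp (by positivity) fun i => by
      rw [mul_assoc]; exact norm_sum_le_card_mul fun ℓ => (B i ℓ).le_of_opNorm_le (hB i ℓ) _
  have hforce : ‖WithLp.toLp 2 f‖ ≤ √n * ε := norm_toLp_le_sqrt_card_mul hε hf
  calc _ = ‖WithLp.toLp 2 (fun i => n⁻¹ • ∑ k, A i k (w i))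
          - WithLp.toLp 2 (fun i => n⁻¹ • ∑ k, A k i (w k))
          + WithLp.toLp 2 (fun i => ∑ ℓ, B i ℓ (w i)) + WithLp.toLp 2 f‖ := rfl
    _ ≤ C * ‖WithLp.toLp 2 w‖ + C * ‖WithLp.toLp 2 w‖
          + Fintype.card κ * C * ‖WithLp.toLp 2 w‖ + √n * ε := by
        refine (norm_add_le _ _).trans (add_le_add ((norm_add_le _ _).trans
          (add_le_add ((norm_sub_le _ _).trans (add_le_add hself hcross)) hext)) hforce)
    _ = _ := by ring

end MeanField

theorem norm_sum_smul_le {κ F : Type*} [Fintype κ] [NormedAddCommGroup F] [NormedSpace ℝ F]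
    {a : EuclideanSpace ℝ κ} {v : κ → F} {Ca Cv : ℝ} (ha : ‖a‖ ≤ Ca) (hv : ∀ l, ‖v l‖ ≤ Cv) :
    ‖∑ l, a l • v l‖ ≤ Fintype.card κ * (Ca * Cv) :=
  norm_sum_le_card_mul fun l => (norm_smul_le _ _).trans <|
    mul_le_mul ((PiLp.norm_apply_le a l).trans ha) (hv l) (norm_nonneg _)
      ((norm_nonneg _).trans ha)

section Particles
variable {ι κ E : Type*} [Fintype ι] [Fintype κ] [NormedAddCommGroup E] [NormedSpace ℝ E]

theorem norm_particle_le_of_norm_kernel_le {K₁ K₂ : E → E} {CK R T : ℝ}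
    (hK₁ : ∀ y, ‖K₁ y‖ ≤ CK) (hK₂ : ∀ y, ‖K₂ y‖ ≤ CK) {x : ℝ → ι → E} {u : ℝ → κ → E}
    (hx0 : ∀ i, ‖x 0 i‖ ≤ R)
    (hx : ∀ t ∈ Icc 0 T, ∀ i, HasDerivAt (fun s => x s i)
      (-(Fintype.card ι : ℝ)⁻¹ • ∑ k, K₁ (x t i - x t k) - ∑ ℓ, K₂ (x t i - u t ℓ)) t) :
    ∀ t ∈ Icc 0 T, ∀ i, ‖x t i‖ ≤ R + CK * (1 + Fintype.card κ) * T := by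
  intro t ht i
  have hdrift : ∀ s, ‖-(Fintype.card ι : ℝ)⁻¹ • ∑ k, K₁ (x s i - x s k)
      - ∑ ℓ, K₂ (x s i - u s ℓ)‖ ≤ CK * (1 + Fintype.card κ) := fun s => by
    have h₁ := norm_average_le ((norm_nonneg _).trans (hK₁ 0)) fun k => hK₁ (x s i - x s k)
    have h₂ := norm_sum_le_card_mul fun ℓ => hK₂ (x s i - u s ℓ)
    rw [neg_smul]
    linarith [norm_sub_le (-((Fintype.card ι : ℝ)⁻¹ • ∑ k, K₁ (x s i - x s k)))
      (∑ ℓ, K₂ (x s i - u s ℓ)), norm_neg ((Fintype.card ι : ℝ)⁻¹ • ∑ k, K₁ (x s i - x s k))]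
  have := norm_le_norm_add_of_norm_deriv_le (fun s hs => hx s hs i) (fun s _ => hdrift s) t ht
  linarith [hx0 i]

end Particles

theorem PiLp.inv_card_mul_sum_norm_sq_le {ι E : Type*} [Fintype ι] [Nonempty ι]
    [SeminormedAddCommGroup E] {w : ι → E} {c : ℝ}
    (h : ‖WithLp.toLp 2 w‖ ≤ √(Fintype.card ι) * c) :
    (Fintype.card ι : ℝ)⁻¹ * ∑ i, ‖w i‖ ^ 2 ≤ c ^ 2 :=
  calc (Fintype.card ι : ℝ)⁻¹ * ∑ i, ‖w i‖ ^ 2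
      = (Fintype.card ι : ℝ)⁻¹ * ‖WithLp.toLp 2 w‖ ^ 2 := by rw [norm_sq_eq_of_L2]
    _ ≤ (Fintype.card ι : ℝ)⁻¹ * (√(Fintype.card ι) * c) ^ 2 := by gcongr
    _ = c ^ 2 := by
        rw [mul_pow, sq_sqrt (Nat.cast_nonneg _), ← mul_assoc,
          inv_mul_cancel₀ (Nat.cast_ne_zero.2 Fintype.card_ne_zero), one_mul]

theorem stmt_19_general {d M L : ℕ} (T R CK Cj Cg : ℝ)
    (K₁ K₂ : EuclideanSpace ℝ (Fin d) → EuclideanSpace ℝ (Fin d))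
    (hK₁b : ∀ x, ‖K₁ x‖ + ‖fderiv ℝ K₁ x‖ ≤ CK)
    (hK₂b : ∀ x, ‖K₂ x‖ + ‖fderiv ℝ K₂ x‖ ≤ CK)
    (jj : EuclideanSpace ℝ (Fin L) → ℝ)
    (hjjb : ∀ p, ‖gradient jj p‖ ≤ Cj)
    (g : Fin L → EuclideanSpace ℝ (Fin d) → ℝ)
    (hgb : ∀ l x, ‖gradient (g l) x‖ ≤ Cg * (1 + ‖x‖)) :
    ∃ Cξ : ℝ, ∀ (N : ℕ), 0 < N →
      ∀ (x ξ : ℝ → Fin N → EuclideanSpace ℝ (Fin d))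
        (u : ℝ → Fin M → EuclideanSpace ℝ (Fin d)),
      (∀ i, ‖x 0 i‖ ≤ R) →
      -- the interacting particle system
      (∀ t ∈ Set.Icc (0 : ℝ) T, ∀ i, HasDerivAt (fun s => x s i)
        (-(N : ℝ)⁻¹ • (∑ k : Fin N, K₁ (x t i - x t k))
          - ∑ ℓ : Fin M, K₂ (x t i - u t ℓ)) t) →
      -- the particle adjoint system
      (∀ t ∈ Set.Icc (0 : ℝ) T, ∀ i, HasDerivAt (fun s => ξ s i)
        ((N : ℝ)⁻¹ • (∑ k : Fin N, (fderiv ℝ K₁ (x t i - x t k)) (ξ t i))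
          - (N : ℝ)⁻¹ • (∑ k : Fin N, (fderiv ℝ K₁ (x t k - x t i)) (ξ t k))
          + (∑ ℓ : Fin M, (fderiv ℝ K₂ (x t i - u t ℓ)) (ξ t i))
          + ∑ l : Fin L,
              (gradient jj (WithLp.toLp 2 (fun l' => (N : ℝ)⁻¹ * ∑ k : Fin N, g l' (x t k))) l)
                • gradient (g l) (x t i)) t) →
      -- terminal condition
      (∀ i, ξ T i = 0) →
      ∀ t ∈ Set.Icc (0 : ℝ) T, (N : ℝ)⁻¹ * ∑ i : Fin N, ‖ξ t i‖ ^ 2 ≤ Cξ := by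
  have hK₁ : ∀ y, ‖K₁ y‖ ≤ CK := fun y => by linarith [hK₁b y, norm_nonneg (fderiv ℝ K₁ y)]
  have hK₂ : ∀ y, ‖K₂ y‖ ≤ CK := fun y => by linarith [hK₂b y, norm_nonneg (fderiv ℝ K₂ y)]
  have hDK₁ : ∀ y, ‖fderiv ℝ K₁ y‖ ≤ CK := fun y => by linarith [hK₁b y, norm_nonneg (K₁ y)]
  have hDK₂ : ∀ y, ‖fderiv ℝ K₂ y‖ ≤ CK := fun y => by linarith [hK₂b y, norm_nonneg (K₂ y)]
  have hCK : 0 ≤ CK := (norm_nonneg _).trans (hK₁ 0)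
  have hCj : 0 ≤ Cj := (norm_nonneg _).trans (hjjb 0)
  set Rx := R + CK * (1 + M) * T
  set ε := L * (Cj * (Cg * (1 + Rx)))
  set K := CK * (2 + M)
  refine ⟨(ε * T * exp (K * T)) ^ 2, fun N hN x ξ u hx0 hx hξ hξT t ht => ?_⟩
  have hxb : ∀ s ∈ Icc 0 T, ∀ i, ‖x s i‖ ≤ Rx := by
    simpa only [Fintype.card_fin] using norm_particle_le_of_norm_kernel_le (u := u) hK₁ hK₂ hx0
      (by simpa only [Fintype.card_fin] using hx)
  have hforce : ∀ s ∈ Icc 0 T, ∀ i, ‖∑ l, gradient jj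
      (WithLp.toLp 2 (fun l' => (N : ℝ)⁻¹ * ∑ k, g l' (x s k))) l • gradient (g l) (x s i)‖
      ≤ ε := fun s hs i => by
    have hgx : ∀ l, ‖gradient (g l) (x s i)‖ ≤ Cg * (1 + Rx) := fun l => by
      have hCg : 0 ≤ Cg := by simpa using (norm_nonneg _).trans (hgb l 0)
      exact (hgb l _).trans (by gcongr; exact hxb s hs i)
    simpa using norm_sum_smul_le (hjjb _) hgx
  have hε : 0 ≤ ε := (norm_nonneg _).trans (hforce t ht ⟨0, hN⟩)
  have hΞ := norm_le_of_norm_deriv_le_of_eq_zero_right (f := fun s => WithLp.toLp 2 (ξ s))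
    (K := K) (ε := √N * ε) (by positivity) (by positivity)
    (fun s hs => PiLp.hasDerivAt_toLp 2 (hξ s hs)) (by simp [show ξ T = 0 from funext hξT])
    (fun s hs => by
      simpa using PiLp.norm_toLp_particleAdjoint_le (fun i k => fderiv ℝ K₁ (x s i - x s k))
        (fun i ℓ => fderiv ℝ K₂ (x s i - u s ℓ)) hCK hε (fun _ _ => hDK₁ _) (fun _ _ => hDK₂ _)
        _ (hforce s hs) (ξ s)) t ht
  have : Nonempty (Fin N) := ⟨⟨0, hN⟩⟩
  simpa only [Fintype.card_fin, sub_zero, mul_assoc] using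
    PiLp.inv_card_mul_sum_norm_sq_le (w := ξ t)
      (by simpa only [Fintype.card_fin, sub_zero, mul_assoc] using hΞ)

/-- uniform-in-`N` bound for the particle adjoint variables:
there is a constant `C_ξ`, independent of `N` (depending only on the data
bounds, `T` and the initial radius `R`), such that
`sup_t (1/N) Σ_i |ξ_t^{N,i}|² ≤ C_ξ`. -/
theorem stmt_19 {d M L : ℕ} (T R CK Cj Cg : ℝ) (hT : 0 < T)
    (K₁ K₂ : EuclideanSpace ℝ (Fin d) → EuclideanSpace ℝ (Fin d))
    (hK₁ : ContDiff ℝ 2 K₁) (hK₂ : ContDiff ℝ 2 K₂)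
    (hK₁b : ∀ x, ‖K₁ x‖ + ‖fderiv ℝ K₁ x‖ ≤ CK)
    (hK₂b : ∀ x, ‖K₂ x‖ + ‖fderiv ℝ K₂ x‖ ≤ CK)
    (jj : EuclideanSpace ℝ (Fin L) → ℝ) (hjj : ContDiff ℝ 1 jj)
    (hjjb : ∀ p, ‖gradient jj p‖ ≤ Cj)
    (g : Fin L → EuclideanSpace ℝ (Fin d) → ℝ)
    (hg : ∀ l, ContDiff ℝ 1 (g l))
    (hgb : ∀ l x, ‖gradient (g l) x‖ ≤ Cg * (1 + ‖x‖)) :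
    ∃ Cξ : ℝ, ∀ (N : ℕ), 0 < N →
      ∀ (x ξ : ℝ → Fin N → EuclideanSpace ℝ (Fin d))
        (u : ℝ → Fin M → EuclideanSpace ℝ (Fin d)),
      (∀ i, ‖x 0 i‖ ≤ R) →
      -- the interacting particle system
      (∀ t ∈ Set.Icc (0 : ℝ) T, ∀ i, HasDerivAt (fun s => x s i)
        (-(N : ℝ)⁻¹ • (∑ k : Fin N, K₁ (x t i - x t k))
          - ∑ ℓ : Fin M, K₂ (x t i - u t ℓ)) t) →
      -- the particle adjoint system
      (∀ t ∈ Set.Icc (0 : ℝ) T, ∀ i, HasDerivAt (fun s => ξ s i)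
        ((N : ℝ)⁻¹ • (∑ k : Fin N, (fderiv ℝ K₁ (x t i - x t k)) (ξ t i))
          - (N : ℝ)⁻¹ • (∑ k : Fin N, (fderiv ℝ K₁ (x t k - x t i)) (ξ t k))
          + (∑ ℓ : Fin M, (fderiv ℝ K₂ (x t i - u t ℓ)) (ξ t i))
          + ∑ l : Fin L,
              (gradient jj (WithLp.toLp 2 (fun l' => (N : ℝ)⁻¹ * ∑ k : Fin N, g l' (x t k))) l)
                • gradient (g l) (x t i)) t) →
      -- terminal condition
      (∀ i, ξ T i = 0) →
      ∀ t ∈ Set.Icc (0 : ℝ) T, (N : ℝ)⁻¹ * ∑ i : Fin N, ‖ξ t i‖ ^ 2 ≤ Cξ :=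
  stmt_19_general T R CK Cj Cg K₁ K₂ hK₁b hK₂b jj hjjb g hgb
end
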